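/- Let U be an N×N real symmetric positive semidefinite matrix with eigenvalues λ_1 ≥ ... ≥ λ_N, and let C ∈ ℝ^{n×N} satisfy C Cᵀ = I_n with eigenvalues λ^{(c)}_1 ≥ ... ≥ λ^{(c)}_n of C U Cᵀ. Then 0 ≤ tr(U²) − tr((C U Cᵀ)²) ≤ λ_{N−n+1} · Σ_{i=1}^{n}(λ_i − λ^{(c)}_i) + C_{U,n}, where C_{U,n} = Σ_{i=1}^{n} λ_i (λ_i − λ_{N−n+i}) + Σ_{i=n+1}^{N} λ_i², and moreover C_{U,n} ≥ 0. -/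

import Mathlib

open Matrix

namespace Stmt4Aux

/-- Orthonormality with respect to the dot product. -/
def DotON {m N : ℕ} (v : Fin m → (Fin N → ℝ)) : Prop :=
  ∀ i j, v i ⬝ᵥ v j = if i = j then 1 else 0

lemma sum_dotProduct' {m N : ℕ} (s : Finset (Fin m)) (f : Fin m → Fin N → ℝ)
    (w : Fin N → ℝ) : (∑ i ∈ s, f i) ⬝ᵥ w = ∑ i ∈ s, f i ⬝ᵥ w := by
  classical
  induction s using Finset.induction_on with
  | empty => simp [zero_dotProduct]
  | insert _ _ h ih => rw [Finset.sum_insert h, Finset.sum_insert h, add_dotProduct, ih]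

lemma dotProduct_sum' {m N : ℕ} (s : Finset (Fin m)) (w : Fin N → ℝ)
    (f : Fin m → Fin N → ℝ) : w ⬝ᵥ (∑ i ∈ s, f i) = ∑ i ∈ s, w ⬝ᵥ f i := by
  classical
  induction s using Finset.induction_on with
  | empty => simp [dotProduct_zero]
  | insert _ _ h ih => rw [Finset.sum_insert h, Finset.sum_insert h, dotProduct_add, ih]

lemma sum_dot {m N : ℕ} {v : Fin m → (Fin N → ℝ)} (hv : DotON v)
    (c d : Fin m → ℝ) :
    (∑ i, c i • v i) ⬝ᵥ (∑ j, d j • v j) = ∑ i, c i * d i := by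
  rw [sum_dotProduct']
  refine Finset.sum_congr rfl fun i _ => ?_
  rw [dotProduct_sum']
  have h2 : ∀ j : Fin m, (c i • v i) ⬝ᵥ (d j • v j) = c i * d j * (if i = j then 1 else 0) := by
    intro j
    rw [smul_dotProduct, dotProduct_smul, hv i j]
    simp [smul_eq_mul, mul_assoc]
  simp_rw [h2]
  rw [Finset.sum_eq_single i]
  · simp
  · intro b _ hb; simp [Ne.symm hb]
  · intro h; exact absurd (Finset.mem_univ i) h

lemma DotON.linearIndependent {m N : ℕ} {v : Fin m → (Fin N → ℝ)} (hv : DotON v) :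
    LinearIndependent ℝ v := by
  rw [Fintype.linearIndependent_iff]
  intro g hg j
  have h := congrArg (fun z => z ⬝ᵥ v j) hg
  simp only [zero_dotProduct] at h
  rw [sum_dotProduct'] at h
  have h2 : ∀ i : Fin m, (g i • v i) ⬝ᵥ v j = if i = j then g i else 0 := by
    intro i
    rw [smul_dotProduct, hv i j]
    simp [smul_eq_mul]
  simp_rw [h2] at h
  rwa [Finset.sum_ite_eq' Finset.univ j g, if_pos (Finset.mem_univ j)] at h

lemma DotON.finrank_span {m N : ℕ} {v : Fin m → (Fin N → ℝ)} (hv : DotON v) :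
    Module.finrank ℝ (Submodule.span ℝ (Set.range v)) = m := by
  rw [finrank_span_eq_card hv.linearIndependent, Fintype.card_fin]

lemma mulVec_sum_smul {p q m : ℕ} (M : Matrix (Fin p) (Fin q) ℝ) (c : Fin m → ℝ)
    (f : Fin m → Fin q → ℝ) :
    M *ᵥ (∑ i, c i • f i) = ∑ i, c i • (M *ᵥ f i) := by
  have h := map_sum M.mulVecLin (fun i => c i • f i) Finset.univ
  simp only [Matrix.mulVecLin_apply, Matrix.mulVec_smul] at h
  exact h

lemma quad_eval {m N : ℕ} {M : Matrix (Fin N) (Fin N) ℝ} {p : Fin m → Fin N → ℝ}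
    (hp : DotON p) {μ : Fin m → ℝ} (hMp : ∀ i, M *ᵥ p i = μ i • p i) (c : Fin m → ℝ) :
    (∑ i, c i • p i) ⬝ᵥ (M *ᵥ ∑ i, c i • p i) = ∑ i, μ i * c i ^ 2 := by
  rw [mulVec_sum_smul]
  have h1 : ∀ i, c i • (M *ᵥ p i) = (c i * μ i) • p i := by
    intro i; rw [hMp i, smul_smul]
  simp_rw [h1]
  rw [sum_dot hp]
  refine Finset.sum_congr rfl fun i _ => ?_; ring

lemma norm_eval {m N : ℕ} {p : Fin m → Fin N → ℝ} (hp : DotON p) (c : Fin m → ℝ) :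
    (∑ i, c i • p i) ⬝ᵥ (∑ i, c i • p i) = ∑ i, c i ^ 2 := by
  rw [sum_dot hp]
  refine Finset.sum_congr rfl fun i _ => ?_; ring

/-- The key interlacing-type inequality: `b k ≤ a k` for sorted eigen-data. -/
lemma key {N n : ℕ} (A : Matrix (Fin N) (Fin N) ℝ)
    (C : Matrix (Fin n) (Fin N) ℝ) (hC : C * Cᵀ = 1)
    (v : Fin N → Fin N → ℝ) (hv : DotON v) (a : Fin N → ℝ)
    (hva : ∀ i, A *ᵥ v i = a i • v i) (ha : Antitone a)
    (w : Fin n → Fin n → ℝ) (hw : DotON w) (b : Fin n → ℝ)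
    (hwb : ∀ i, (C * A * Cᵀ) *ᵥ w i = b i • w i) (hb : Antitone b)
    (hnN : n ≤ N) (k : Fin n) : b k ≤ a ⟨k.val, k.isLt.trans_le hnN⟩ := by
  classical
  have hk1 : k.val + 1 ≤ n := k.isLt
  have hCC : ∀ y z : Fin n → ℝ, (Cᵀ *ᵥ y) ⬝ᵥ (Cᵀ *ᵥ z) = y ⬝ᵥ z := by
    intro y z
    rw [Matrix.dotProduct_mulVec, Matrix.vecMul_transpose, Matrix.mulVec_mulVec, hC,
      Matrix.one_mulVec]
  have hT : ∀ y : Fin n → ℝ, (Cᵀ *ᵥ y) ⬝ᵥ (A *ᵥ (Cᵀ *ᵥ y)) = y ⬝ᵥ ((C * A * Cᵀ) *ᵥ y) := by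
    intro y
    rw [Matrix.mulVec_mulVec, Matrix.mulVec_transpose, Matrix.dotProduct_mulVec,
      Matrix.vecMul_vecMul, ← Matrix.dotProduct_mulVec, ← Matrix.mul_assoc]
  set u : Fin (k.val + 1) → Fin N → ℝ := fun i => Cᵀ *ᵥ w (Fin.castLE hk1 i) with hu_def
  have hu : DotON u := by
    intro i j
    show (Cᵀ *ᵥ w (Fin.castLE hk1 i)) ⬝ᵥ (Cᵀ *ᵥ w (Fin.castLE hk1 j)) = _
    rw [hCC, hw]
    simp [Fin.ext_iff]
  set e : Fin (N - k.val) → Fin N → ℝ := fun j => v ⟨k.val + j.val, by omega⟩ with he_def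
  have he : DotON e := by
    intro i j
    show v ⟨k.val + i.val, by omega⟩ ⬝ᵥ v ⟨k.val + j.val, by omega⟩ = _
    rw [hv]
    exact if_congr (by simp [Fin.ext_iff]) rfl rfl
  set V := Submodule.span ℝ (Set.range u) with hV_def
  set E := Submodule.span ℝ (Set.range e) with hE_def
  have hVrank : Module.finrank ℝ V = k.val + 1 := hu.finrank_span
  have hErank : Module.finrank ℝ E = N - k.val := he.finrank_span
  have hsum := Submodule.finrank_sup_add_finrank_inf_eq V E
  have hle : Module.finrank ℝ ↥(V ⊔ E) ≤ N := by
    have h := Submodule.finrank_le (V ⊔ E)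
    rwa [Module.finrank_fin_fun] at h
  have hkN : k.val < N := k.isLt.trans_le hnN
  have hpos : 0 < Module.finrank ℝ ↥(V ⊓ E) := by omega
  have hnt : Nontrivial ↥(V ⊓ E) := Module.nontrivial_of_finrank_pos hpos
  obtain ⟨x, hxne⟩ := exists_ne (0 : ↥(V ⊓ E))
  obtain ⟨hxV, hxE⟩ := Submodule.mem_inf.mp x.2
  have hx0 : (x : Fin N → ℝ) ≠ 0 := fun h => hxne (Subtype.ext h)
  obtain ⟨c, hc⟩ := (Submodule.mem_span_range_iff_exists_fun ℝ).mp hxV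
  obtain ⟨d, hd⟩ := (Submodule.mem_span_range_iff_exists_fun ℝ).mp hxE
  -- E-side computations
  have hquadE : (x : Fin N → ℝ) ⬝ᵥ (A *ᵥ (x : Fin N → ℝ))
      = ∑ j : Fin (N - k.val), a ⟨k.val + j.val, by omega⟩ * d j ^ 2 := by
    rw [← hd]
    exact quad_eval he (fun j => hva ⟨k.val + j.val, by omega⟩) d
  have hnormE : (x : Fin N → ℝ) ⬝ᵥ (x : Fin N → ℝ) = ∑ j, d j ^ 2 := by
    rw [← hd]; exact norm_eval he d
  -- V-side computations
  set y : Fin n → ℝ := ∑ i, c i • w (Fin.castLE hk1 i) with hy_def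
  have hxy : Cᵀ *ᵥ y = (x : Fin N → ℝ) := by
    rw [hy_def, mulVec_sum_smul, ← hc]
  have hwsub : DotON (fun i : Fin (k.val + 1) => w (Fin.castLE hk1 i)) := by
    intro i j
    show w (Fin.castLE hk1 i) ⬝ᵥ w (Fin.castLE hk1 j) = _
    rw [hw]
    simp [Fin.ext_iff]
  have hquadV : y ⬝ᵥ ((C * A * Cᵀ) *ᵥ y)
      = ∑ i : Fin (k.val + 1), b (Fin.castLE hk1 i) * c i ^ 2 :=
    quad_eval hwsub (fun i => hwb (Fin.castLE hk1 i)) c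
  have hnormV : y ⬝ᵥ y = ∑ i, c i ^ 2 := norm_eval hwsub c
  have hx_quad : (x : Fin N → ℝ) ⬝ᵥ (A *ᵥ (x : Fin N → ℝ))
      = ∑ i : Fin (k.val + 1), b (Fin.castLE hk1 i) * c i ^ 2 := by
    rw [← hxy, hT, hquadV]
  have hx_norm : (x : Fin N → ℝ) ⬝ᵥ (x : Fin N → ℝ) = ∑ i, c i ^ 2 := by
    rw [← hxy, hCC, hnormV]
  -- positivity of the norm
  have h0 : 0 ≤ (x : Fin N → ℝ) ⬝ᵥ (x : Fin N → ℝ) := by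
    rw [hx_norm]; exact Finset.sum_nonneg fun i _ => sq_nonneg _
  have hnormpos : 0 < (x : Fin N → ℝ) ⬝ᵥ (x : Fin N → ℝ) :=
    h0.lt_of_ne fun h => hx0 (dotProduct_self_eq_zero.mp h.symm)
  -- lower bound
  have hlow : b k * ((x : Fin N → ℝ) ⬝ᵥ (x : Fin N → ℝ))
      ≤ (x : Fin N → ℝ) ⬝ᵥ (A *ᵥ (x : Fin N → ℝ)) := by
    rw [hx_quad, hx_norm, Finset.mul_sum]
    refine Finset.sum_le_sum fun i _ => ?_
    have hik : Fin.castLE hk1 i ≤ k := by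
      rw [Fin.le_def]; simp only [Fin.coe_castLE]; omega
    exact mul_le_mul_of_nonneg_right (hb hik) (sq_nonneg _)
  -- upper bound
  have hhigh : (x : Fin N → ℝ) ⬝ᵥ (A *ᵥ (x : Fin N → ℝ))
      ≤ a ⟨k.val, k.isLt.trans_le hnN⟩ * ((x : Fin N → ℝ) ⬝ᵥ (x : Fin N → ℝ)) := by
    rw [hquadE, hnormE, Finset.mul_sum]
    refine Finset.sum_le_sum fun j _ => ?_
    have hjk : (⟨k.val, k.isLt.trans_le hnN⟩ : Fin N) ≤ ⟨k.val + j.val, by omega⟩ := by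
      simp only [Fin.mk_le_mk]; omega
    exact mul_le_mul_of_nonneg_right (ha hjk) (sq_nonneg _)
  exact le_of_mul_le_mul_right (hlow.trans hhigh) hnormpos

lemma trace_sq {m : ℕ} {A : Matrix (Fin m) (Fin m) ℝ} (hA : A.IsHermitian) :
    (A * A).trace = ∑ i, hA.eigenvalues i ^ 2 := by
  set S : Matrix (Fin m) (Fin m) ℝ := ↑(hA.eigenvectorUnitary) with hS
  set D : Matrix (Fin m) (Fin m) ℝ := Matrix.diagonal (RCLike.ofReal ∘ hA.eigenvalues) with hD
  have h1 : star S * S = 1 := Unitary.coe_star_mul_self hA.eigenvectorUnitary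
  have hAeq : A = S * D * star S := hA.spectral_theorem
  have h2 : A * A = S * (D * D) * star S := by
    rw [hAeq]
    simp only [Matrix.mul_assoc]
    rw [← Matrix.mul_assoc (star S) S (D * star S), h1, Matrix.one_mul]
  rw [h2, Matrix.trace_mul_comm, ← Matrix.mul_assoc, h1, Matrix.one_mul]
  rw [hD, Matrix.diagonal_mul_diagonal, Matrix.trace_diagonal]
  refine Finset.sum_congr rfl fun i _ => ?_
  simp [Function.comp, pow_two]

lemma sum_split {N n : ℕ} (hnN : n ≤ N) (f : Fin N → ℝ) :
    ∑ i : Fin N, f i =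
      (∑ i : Fin n, f ⟨i.val, by omega⟩) + ∑ i : Fin N, if n ≤ i.val then f i else 0 := by
  classical
  rw [← Finset.sum_filter_add_sum_filter_not Finset.univ (fun i : Fin N => i.val < n) f]
  congr 1
  · have hmap : Finset.univ.filter (fun i : Fin N => i.val < n)
        = Finset.univ.map (Fin.castLEEmb hnN) := by
      ext j
      simp only [Finset.mem_filter, Finset.mem_univ, true_and, Finset.mem_map]
      constructor
      · intro hj; exact ⟨⟨j.val, hj⟩, rfl⟩
      · rintro ⟨i, -, rfl⟩
        simp
    rw [hmap, Finset.sum_map]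
    exact Finset.sum_congr rfl fun i _ => rfl
  · rw [Finset.sum_filter]
    exact Finset.sum_congr rfl fun i _ => by simp [not_lt]

end Stmt4Aux

open Stmt4Aux in
/-- Bound on `tr(U²) − tr((CUCᵀ)²)` via sorted eigenvalues (Lemma on `I₁ - I₁'`). -/
theorem stmt4 {N n : ℕ} (hn : 0 < n) (hnN : n ≤ N)
    (U : Matrix (Fin N) (Fin N) ℝ) (hU : U.PosSemidef)
    (C : Matrix (Fin n) (Fin N) ℝ) (hC : C * Cᵀ = 1)
    (hB : (C * U * Cᵀ).IsHermitian)
    (lam : Fin N → ℝ) (lamc : Fin n → ℝ)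
    (hlam_mono : Antitone lam) (hlamc_mono : Antitone lamc)
    (hlam : ∃ σ : Equiv.Perm (Fin N), lam = hU.isHermitian.eigenvalues ∘ σ)
    (hlamc : ∃ σ : Equiv.Perm (Fin n), lamc = hB.eigenvalues ∘ σ) :
    0 ≤ (U * U).trace - ((C * U * Cᵀ) * (C * U * Cᵀ)).trace ∧
    (U * U).trace - ((C * U * Cᵀ) * (C * U * Cᵀ)).trace ≤
      lam ⟨N - n, by omega⟩ *
        (∑ i : Fin n, (lam ⟨i.val, by have := i.isLt; omega⟩ - lamc i)) +
      ((∑ i : Fin n, lam ⟨i.val, by have := i.isLt; omega⟩ *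
          (lam ⟨i.val, by have := i.isLt; omega⟩ -
            lam ⟨N - n + i.val, by have := i.isLt; omega⟩)) +
        ∑ i : Fin N, if n ≤ i.val then lam i ^ 2 else 0) ∧
    0 ≤ (∑ i : Fin n, lam ⟨i.val, by have := i.isLt; omega⟩ *
          (lam ⟨i.val, by have := i.isLt; omega⟩ -
            lam ⟨N - n + i.val, by have := i.isLt; omega⟩)) +
        ∑ i : Fin N, if n ≤ i.val then lam i ^ 2 else 0 := by
  classical
  obtain ⟨σ, hσ⟩ := hlam
  obtain ⟨τ, hτ⟩ := hlamc
  -- eigenvector families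
  set v : Fin N → Fin N → ℝ := fun i => ⇑(hU.isHermitian.eigenvectorBasis (σ i)) with hv_def
  set w : Fin n → Fin n → ℝ := fun i => ⇑(hB.eigenvectorBasis (τ i)) with hw_def
  have hvON : DotON v := by
    intro i j
    have h := hU.isHermitian.eigenvectorBasis.orthonormal
    rw [orthonormal_iff_ite] at h
    have h2 := h (σ i) (σ j)
    simp only [PiLp.inner_apply, RCLike.inner_apply, conj_trivial, EmbeddingLike.apply_eq_iff_eq]
      at h2
    simpa [hv_def, dotProduct, mul_comm] using h2
  have hwON : DotON w := by
    intro i j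
    have h := hB.eigenvectorBasis.orthonormal
    rw [orthonormal_iff_ite] at h
    have h2 := h (τ i) (τ j)
    simp only [PiLp.inner_apply, RCLike.inner_apply, conj_trivial, EmbeddingLike.apply_eq_iff_eq]
      at h2
    simpa [hw_def, dotProduct, mul_comm] using h2
  have hvEig : ∀ i, U *ᵥ v i = lam i • v i := by
    intro i
    rw [hσ]
    exact hU.isHermitian.mulVec_eigenvectorBasis (σ i)
  have hwEig : ∀ i, (C * U * Cᵀ) *ᵥ w i = lamc i • w i := by
    intro i
    rw [hτ]
    exact hB.mulVec_eigenvectorBasis (τ i)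
  -- nonnegativity of eigenvalues of U
  have nonneg : ∀ j : Fin N, 0 ≤ lam j := by
    intro j
    rw [hσ]
    exact hU.eigenvalues_nonneg (σ j)
  -- upper interlacing : lamc i ≤ lam i
  have upper : ∀ i : Fin n, lamc i ≤ lam ⟨i.val, by omega⟩ := by
    intro i
    exact key U C hC v hvON lam hvEig hlam_mono w hwON lamc hwEig hlamc_mono hnN i
  -- lower interlacing : lam (N-n+i) ≤ lamc i
  have lower : ∀ i : Fin n, lam ⟨N - n + i.val, by omega⟩ ≤ lamc i := by
    intro i
    have hnegB : C * (-U) * Cᵀ = -(C * U * Cᵀ) := by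
      rw [Matrix.mul_neg, Matrix.neg_mul]
    have hv' : DotON (fun j : Fin N => v j.rev) := by
      intro a b
      have := hvON a.rev b.rev
      simpa [Fin.rev_inj] using this
    have hw' : DotON (fun j : Fin n => w j.rev) := by
      intro a b
      have := hwON a.rev b.rev
      simpa [Fin.rev_inj] using this
    have hva' : ∀ j : Fin N, (-U) *ᵥ v j.rev = (-lam j.rev) • v j.rev := by
      intro j
      rw [Matrix.neg_mulVec, hvEig j.rev, neg_smul]
    have hwb' : ∀ j : Fin n, (C * (-U) * Cᵀ) *ᵥ w j.rev = (-lamc j.rev) • w j.rev := by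
      intro j
      rw [hnegB, Matrix.neg_mulVec, hwEig j.rev, neg_smul]
    have ha' : Antitone (fun j : Fin N => -lam j.rev) := by
      intro x y hxy
      simp only [neg_le_neg_iff]
      exact hlam_mono (Fin.rev_le_rev.mpr hxy)
    have hb' : Antitone (fun j : Fin n => -lamc j.rev) := by
      intro x y hxy
      simp only [neg_le_neg_iff]
      exact hlamc_mono (Fin.rev_le_rev.mpr hxy)
    have h := key (-U) C hC (fun j => v j.rev) hv' (fun j => -lam j.rev) hva' ha'
      (fun j => w j.rev) hw' (fun j => -lamc j.rev) hwb' hb' hnN i.rev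
    have h' : -lamc (Fin.rev (Fin.rev i)) ≤ -lam (Fin.rev ⟨(Fin.rev i).val, by omega⟩) := h
    rw [Fin.rev_rev] at h'
    have e2 : (Fin.rev (⟨(Fin.rev i).val, by omega⟩ : Fin N)) = ⟨N - n + i.val, by omega⟩ := by
      ext
      simp [Fin.val_rev]
      omega
    rw [e2] at h'
    linarith
  -- traces
  have tU : (U * U).trace = ∑ i : Fin N, lam i ^ 2 := by
    rw [trace_sq hU.isHermitian, hσ]
    exact (Equiv.sum_comp σ (fun j => hU.isHermitian.eigenvalues j ^ 2)).symm
  have tB : ((C * U * Cᵀ) * (C * U * Cᵀ)).trace = ∑ i : Fin n, lamc i ^ 2 := by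
    rw [trace_sq hB, hτ]
    exact (Equiv.sum_comp τ (fun j => hB.eigenvalues j ^ 2)).symm
  have hsplit := sum_split hnN (fun i => lam i ^ 2)
  have lamc_nonneg : ∀ i : Fin n, 0 ≤ lamc i := fun i =>
    (nonneg ⟨N - n + i.val, by omega⟩).trans (lower i)
  have htail : (0:ℝ) ≤ ∑ i : Fin N, (if n ≤ i.val then lam i ^ 2 else 0) :=
    Finset.sum_nonneg fun i _ => by split <;> [exact sq_nonneg _; exact le_refl 0]
  refine ⟨?_, ?_, ?_⟩
  · -- Goal 1 : 0 ≤ tr(U²) - tr(B²)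
    rw [tU, tB, hsplit]
    have hterm : ∀ i : Fin n, lamc i ^ 2 ≤ lam (⟨i.val, by omega⟩ : Fin N) ^ 2 := fun i =>
      pow_le_pow_left₀ (lamc_nonneg i) (upper i) 2
    have hsum := Finset.sum_le_sum (fun i (_ : i ∈ (Finset.univ : Finset (Fin n))) => hterm i)
    linarith
  · -- Goal 2 : the main upper bound
    have hper : ∀ i : Fin n,
        lam (⟨i.val, by omega⟩ : Fin N) ^ 2 - lamc i ^ 2 ≤
          lam (⟨N - n, by omega⟩ : Fin N) * (lam (⟨i.val, by omega⟩ : Fin N) - lamc i) +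
            lam (⟨i.val, by omega⟩ : Fin N) *
              (lam (⟨i.val, by omega⟩ : Fin N) - lam (⟨N - n + i.val, by omega⟩ : Fin N)) := by
      intro i
      have h1 := upper i
      have h2 := lower i
      have h3 : lam (⟨N - n + i.val, by omega⟩ : Fin N) ≤ lam (⟨N - n, by omega⟩ : Fin N) :=
        hlam_mono (by simp only [Fin.mk_le_mk]; omega)
      have h4 : (0:ℝ) ≤ lam (⟨N - n + i.val, by omega⟩ : Fin N) := nonneg _
      have h5 : (0:ℝ) ≤ lam (⟨i.val, by omega⟩ : Fin N) := nonneg _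
      nlinarith [h1, h2, h3, h4, h5]
    have hsum := Finset.sum_le_sum (fun i (_ : i ∈ (Finset.univ : Finset (Fin n))) => hper i)
    rw [tU, tB, hsplit]
    rw [Finset.sum_sub_distrib, Finset.sum_add_distrib, ← Finset.mul_sum] at hsum
    linarith
  · -- Goal 3 : nonnegativity of the constant
    have t1 : (0:ℝ) ≤ ∑ i : Fin n, lam (⟨i.val, by omega⟩ : Fin N) *
        (lam (⟨i.val, by omega⟩ : Fin N) - lam (⟨N - n + i.val, by omega⟩ : Fin N)) :=
      Finset.sum_nonneg fun i _ =>
        mul_nonneg (nonneg _)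
          (sub_nonneg.mpr (hlam_mono (by simp only [Fin.mk_le_mk]; omega)))
    linarith
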